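/- Let G be a profinite group and g ∈ G an element having a countable Engel sink {s₁, s₂, ...}. Then there exist positive integers i, j, an open normal subgroup N of G, and b ∈ G such that [nb, ᵢg] = s_j for all n ∈ N. -/

import Mathlib

/-- The left-normed iterated commutator `[x, ₙg]`: `engel g x 0 = x` and
`engel g x (n+1) = [engel g x n, g] = (engel g x n)⁻¹ * g⁻¹ * (engel g x n) * g`. -/
def engel {G : Type*} [Group G] (g x : G) : ℕ → G
  | 0 => x
  | n + 1 => (engel g x n)⁻¹ * g⁻¹ * engel g x n * g

/-- `E` is an Engel sink of `g`: for every `x` all sufficiently long commutators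
`[x, ₙg]` lie in `E`. -/
def IsEngelSink {G : Type*} [Group G] (g : G) (E : Set G) : Prop :=
  ∀ x : G, ∃ N : ℕ, ∀ n : ℕ, N ≤ n → engel g x n ∈ E

/-! By Baire's theorem, the countably many closed sets `{x | [x, ᵢg] = s j}` (`i ≥ 1`), which
cover `G` because `s` is an Engel sink, cannot all have empty interior. A nonempty open set of a
profinite group contains a coset `N b` of an open normal subgroup `N`. -/

section

variable {G : Type*} [Group G] [TopologicalSpace G] [IsTopologicalGroup G]

theorem continuous_engel (g : G) (n : ℕ) : Continuous (engel g · n) := by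
  induction n with
  | zero => exact continuous_id
  | succ n ih =>
    show Continuous fun x => (engel g x n)⁻¹ * g⁻¹ * engel g x n * g
    fun_prop

theorem IsEngelSink.exists_interior_engel_eq_nonempty [T1Space G] [BaireSpace G]
    {g : G} {s : ℕ → G} (hE : IsEngelSink g (Set.range s)) :
    ∃ i j, 1 ≤ i ∧ (interior {x | engel g x i = s j}).Nonempty := by
  let F : ℕ × ℕ → Set G := fun p => {x | engel g x (p.1 + 1) = s p.2}
  have hF_closed : ∀ p, IsClosed (F p) := fun p =>
    isClosed_singleton.preimage (continuous_engel g (p.1 + 1))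
  have hF_cover : ⋃ p, F p = Set.univ := by
    refine Set.eq_univ_of_forall fun x => ?_
    obtain ⟨m, hm⟩ := hE x
    obtain ⟨j, hj⟩ := hm (m + 1) m.le_succ
    exact Set.mem_iUnion.2 ⟨(m, j), hj.symm⟩
  obtain ⟨⟨i, j⟩, hint⟩ := nonempty_interior_of_iUnion_of_closed hF_closed hF_cover
  exact ⟨i + 1, j, i.succ_pos, hint⟩

theorem IsOpen.exists_openNormalSubgroup_mul_subset [CompactSpace G] [TotallyDisconnectedSpace G]
    {U : Set G} (hU : IsOpen U) (hU_ne : U.Nonempty) :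
    ∃ (N : OpenNormalSubgroup G) (b : G), ∀ n ∈ N, n * b ∈ U := by
  obtain ⟨b, hb⟩ := hU_ne
  have h_one : (1 : G) ∈ (· * b) ⁻¹' U := by simpa using hb
  obtain ⟨N, hN⟩ := ProfiniteGrp.exist_openNormalSubgroup_sub_open_nhds_of_one
    (hU.preimage (continuous_mul_const b)) h_one
  exact ⟨N, b, fun n hn => hN hn⟩

end

/-- Let `G` be a profinite group and `g ∈ G` an element with a countable Engel sink
`{s 0, s 1, ...}`.  Then there are positive integers `i, j`, an open normal subgroup `N`
and `b ∈ G` such that `[n*b, ᵢg] = s j` for all `n ∈ N`. -/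
theorem profinite_countable_sink_coset
    {G : Type*} [Group G] [TopologicalSpace G] [IsTopologicalGroup G]
    [CompactSpace G] [T2Space G] [TotallyDisconnectedSpace G]
    (g : G) (s : ℕ → G) (hE : IsEngelSink g (Set.range s)) :
    ∃ (i j : ℕ) (N : Subgroup G) (b : G), 1 ≤ i ∧ N.Normal ∧ IsOpen (N : Set G) ∧
      ∀ n ∈ N, engel g (n * b) i = s j := by
  obtain ⟨i, j, hi, hint⟩ := hE.exists_interior_engel_eq_nonempty
  obtain ⟨N, b, hNb⟩ := isOpen_interior.exists_openNormalSubgroup_mul_subset hint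
  exact ⟨i, j, N.toSubgroup, b, hi, N.isNormal', N.isOpen', fun n hn =>
    interior_subset (s := {x | engel g x i = s j}) (hNb n hn)⟩
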